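/- Assume the loss ℓ has values in [0,1]. Then Λ_β(h,x) ≤ β for every h ∈ H and x ∈ X^n, and for n ≥ 8 and δ > 0, with probability at least 1 − δ in x ∼ μ^n and h ∼ Ĝ_β(x), κ(L̂(h,x), L(h)) ≤ (1/n)( β + ln(2√n/δ) ). -/

import Mathlib

open MeasureTheory Real Filter

noncomputable section

variable {H X : Type*} [MeasurableSpace H] [MeasurableSpace X]

/-- Empirical loss of hypothesis `h` on sample `x`. -/
def empLoss (ℓ : H → X → ℝ) (n : ℕ) (h : H) (x : Fin n → X) : ℝ :=
  (∑ i, ℓ h (x i)) / n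

/-- True (expected) loss of hypothesis `h`. -/
def trueLoss (ℓ : H → X → ℝ) (μ : Measure X) (h : H) : ℝ :=
  ∫ z, ℓ h z ∂μ

/-- Partition function of the Gibbs posterior. -/
def partitionZ (ℓ : H → X → ℝ) (pr : Measure H) (n : ℕ) (β : ℝ) (x : Fin n → X) : ℝ :=
  ∫ h, Real.exp (-β * empLoss ℓ n h x) ∂pr

/-- Gibbs posterior at inverse temperature `β`. -/
def gibbs (ℓ : H → X → ℝ) (pr : Measure H) (n : ℕ) (β : ℝ) (x : Fin n → X) : Measure H :=
  pr.withDensity fun h =>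
    ENNReal.ofReal (Real.exp (-β * empLoss ℓ n h x) / partitionZ ℓ pr n β x)

/-- Joint measure ρ of the sample and the Gibbs draw, on H × Xⁿ. -/
def jointRho (ℓ : H → X → ℝ) (μ : Measure X) (pr : Measure H) (n : ℕ) (β : ℝ) :
    Measure (H × (Fin n → X)) :=
  (Measure.pi fun _ : Fin n => μ).bind fun x => (gibbs ℓ pr n β x).map fun h => (h, x)

/-- Cumulative distribution function of the empirical loss under the prior. -/
def phiHat (ℓ : H → X → ℝ) (pr : Measure H) (n : ℕ) (r : ℝ) (x : Fin n → X) : ℝ :=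
  (pr {g | empLoss ℓ n g x ≤ r}).toReal

/-- Complexity measure Λ_β(h,x). -/
def Lam (ℓ : H → X → ℝ) (pr : Measure H) (n : ℕ) (β : ℝ) (h : H) (x : Fin n → X) : ℝ :=
  sInf {v : ℝ | ∃ r : ℝ, 0 < phiHat ℓ pr n (empLoss ℓ n h x + r) x ∧
    v = β * r + Real.log (1 / phiHat ℓ pr n (empLoss ℓ n h x + r) x)}

/-- Relative entropy of two Bernoulli variables. -/
def klBin (p q : ℝ) : ℝ :=
  p * Real.log (p / q) + (1 - p) * Real.log ((1 - p) / (1 - q))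

/-!
For `Λ_β ≤ β`, take `r = 1 - L̂(h, x)`: then `φ̂ = 1` and the value `β r ≤ β` is admissible, while
every admissible value is at least `-β` because `r ≥ -1` and `φ̂ ≤ 1`.

For the deviation bound, `Z ≥ e^{-β}` bounds the Gibbs density `e^{-β L̂} / Z` by `e^β`, so the
joint law `ρ` is dominated by `e^β (π ⊗ μⁿ)`. For each fixed `h`, the Chernoff bound in
relative-entropy form gives `μⁿ {κ(L̂(h, ·), L(h)) > t} ≤ 2 e^{-n t}`: the upper tail by the
exponential moment method at the optimal exponent, the lower tail by passing to `1 - ℓ`. With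
`n t = β + ln (2 √n / δ)` the failure probability is at most `δ / √n ≤ δ`.
-/

open ProbabilityTheory Set Topology
open scoped NNReal ENNReal

section BernoulliKL

variable {p q : ℝ}

lemma klBin_one_sub_one_sub : klBin (1 - q) (1 - p) = klBin q p := by
  unfold klBin
  rw [sub_sub_cancel, sub_sub_cancel]
  ring

lemma klBin_self (hp0 : p ≠ 0) (hp1 : p ≠ 1) : klBin p p = 0 := by
  simp [klBin, div_self hp0, div_self (sub_ne_zero.2 hp1.symm)]

lemma continuous_klBin_left (hp0 : p ≠ 0) (hp1 : p ≠ 1) : Continuous fun q => klBin q p := by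
  have hlog_div : ∀ a b : ℝ, b ≠ 0 → a * log (a / b) = a * log a - a * log b := fun a b hb => by
    rcases eq_or_ne a 0 with rfl | ha
    · simp
    · rw [log_div ha hb]; ring
  simp_rw [klBin, hlog_div _ p hp0, hlog_div _ (1 - p) (sub_ne_zero.2 hp1.symm)]
  have : Continuous fun q : ℝ => (1 - q) * log (1 - q) := continuous_mul_log.comp (by fun_prop)
  fun_prop

lemma klBin_zero_right_nonpos (hq : q ∈ Icc 0 1) : klBin q 0 ≤ 0 := by
  have : klBin q 0 = (1 - q) * log (1 - q) := by simp [klBin]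
  rw [this]
  exact mul_nonpos_of_nonneg_of_nonpos (by linarith [hq.2])
    (log_nonpos (by linarith [hq.2]) (by linarith [hq.1]))

lemma klBin_one_right_nonpos (hq : q ∈ Icc 0 1) : klBin q 1 ≤ 0 := by
  rw [← klBin_one_sub_one_sub, sub_self]
  exact klBin_zero_right_nonpos ⟨by linarith [hq.2], by linarith [hq.1]⟩

end BernoulliKL

section Chernoff

variable {μ : Measure X} [IsProbabilityMeasure μ] {f : X → ℝ} {n : ℕ}

lemma sum_div_mem_Icc {α : Type*} {g : α → ℝ} (hg01 : ∀ z, g z ∈ Icc (0 : ℝ) 1)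
    (hn : 0 < n) (x : Fin n → α) : (∑ i, g (x i)) / n ∈ Icc (0 : ℝ) 1 := by
  have hn' : (0 : ℝ) < n := by exact_mod_cast hn
  refine ⟨div_nonneg (Finset.sum_nonneg fun i _ => (hg01 _).1) hn'.le, ?_⟩
  rw [div_le_one hn']
  calc ∑ i, g (x i) ≤ ∑ _i : Fin n, (1 : ℝ) := Finset.sum_le_sum fun i _ => (hg01 _).2
    _ = n := by simp

lemma integrable_of_mem_Icc (hf : Measurable f) (hf01 : ∀ z, f z ∈ Icc (0 : ℝ) 1) :
    Integrable f μ :=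
  .of_bound hf.aestronglyMeasurable 1 <| ae_of_all _ fun z => by
    rw [norm_eq_abs, abs_le]; constructor <;> linarith [(hf01 z).1, (hf01 z).2]

lemma integral_mem_Icc (hf : Measurable f) (hf01 : ∀ z, f z ∈ Icc (0 : ℝ) 1) :
    ∫ z, f z ∂μ ∈ Icc (0 : ℝ) 1 :=
  ⟨integral_nonneg fun z => (hf01 z).1, by
    simpa using integral_mono (integrable_of_mem_Icc hf hf01) (integrable_const (μ := μ) (1 : ℝ))
      fun z => (hf01 z).2⟩

lemma mgf_le_of_mem_Icc (hf : Measurable f) (hf01 : ∀ z, f z ∈ Icc (0 : ℝ) 1) (c : ℝ) :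
    mgf f μ c ≤ 1 - ∫ z, f z ∂μ + (∫ z, f z ∂μ) * exp c := by
  have hfi := integrable_of_mem_Icc (μ := μ) hf hf01
  have hfi' : Integrable (fun z => 1 - f z) μ := (integrable_const 1).sub hfi
  have hconv : ∀ z, exp (c * f z) ≤ 1 - f z + f z * exp c := fun z => by
    have h := convexOn_exp.2 (mem_univ 0) (mem_univ c) (by linarith [(hf01 z).2]) (hf01 z).1
      (sub_add_cancel 1 (f z))
    simpa [mul_comm c] using h
  calc mgf f μ c ≤ ∫ z, (1 - f z + f z * exp c) ∂μ :=
        integral_mono_of_nonneg (ae_of_all _ fun z => (exp_pos _).le)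
          (hfi'.add (hfi.mul_const _)) (ae_of_all _ hconv)
    _ = 1 - ∫ z, f z ∂μ + (∫ z, f z ∂μ) * exp c := by
        rw [integral_add hfi' (hfi.mul_const _),
          integral_sub (integrable_const 1) hfi, integral_mul_const]
        simp

lemma mgf_sum_pi (c : ℝ) :
    mgf (fun x : Fin n → X => ∑ i, f (x i)) (Measure.pi fun _ => μ) c = mgf f μ c ^ n := by
  simp only [mgf, Finset.mul_sum, exp_sum]
  rw [integral_fintype_prod_eq_pow (fun z => exp (c * f z)), Fintype.card_fin]

lemma measureReal_sum_div_ge_le_exp_mul (hf : Measurable f) (hf01 : ∀ z, f z ∈ Icc (0 : ℝ) 1)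
    (hn : 0 < n) {c : ℝ} (hc : 0 ≤ c) (q : ℝ) :
    (Measure.pi fun _ : Fin n => μ).real {x | q ≤ (∑ i, f (x i)) / n} ≤
      exp (-(c * (n * q))) * (1 - ∫ z, f z ∂μ + (∫ z, f z ∂μ) * exp c) ^ n := by
  have hn' : (0 : ℝ) < n := by exact_mod_cast hn
  have hset : {x : Fin n → X | q ≤ (∑ i, f (x i)) / n} = {x | n * q ≤ ∑ i, f (x i)} := by
    ext x; simp only [mem_ofPred_eq, le_div_iff₀ hn', mul_comm]
  have hint : Integrable (fun x : Fin n → X => exp (c * ∑ i, f (x i)))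
      (Measure.pi fun _ => μ) := by
    refine .of_bound (by fun_prop : Measurable _).aestronglyMeasurable (exp (c * n))
      (ae_of_all _ fun x => ?_)
    have h := (sum_div_mem_Icc hf01 hn x).2
    rw [div_le_one hn'] at h
    rw [norm_eq_abs, abs_of_pos (exp_pos _), exp_le_exp]
    exact mul_le_mul_of_nonneg_left h hc
  rw [hset]
  calc _ ≤ exp (-c * (n * q)) * mgf (fun x : Fin n → X => ∑ i, f (x i))
          (Measure.pi fun _ => μ) c := measure_ge_le_exp_mul_mgf _ hc hint
    _ ≤ _ := by
      rw [mgf_sum_pi, neg_mul]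
      gcongr
      · exact mgf_nonneg
      · exact mgf_le_of_mem_Icc hf hf01 c

lemma measureReal_sum_div_ge_le_exp_klBin_of_lt_one (hf : Measurable f)
    (hf01 : ∀ z, f z ∈ Icc (0 : ℝ) 1) (hn : 0 < n) {q : ℝ} (hp0 : 0 < ∫ z, f z ∂μ)
    (hpq : ∫ z, f z ∂μ < q) (hq1 : q < 1) :
    (Measure.pi fun _ : Fin n => μ).real {x | q ≤ (∑ i, f (x i)) / n} ≤
      exp (-(n * klBin q (∫ z, f z ∂μ))) := by
  set p := ∫ z, f z ∂μ
  have hq0 : 0 < q := hp0.trans hpq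
  have hnum : 0 < q * (1 - p) := mul_pos hq0 (by linarith)
  have hden : 0 < p * (1 - q) := mul_pos hp0 (by linarith)
  -- the optimal exponent of the Chernoff bound
  set c := log (q * (1 - p) / (p * (1 - q))) with hc_def
  have hc : 0 ≤ c := log_nonneg (by rw [le_div_iff₀ hden]; nlinarith)
  have hc_eq : c = log q + log (1 - p) - log p - log (1 - q) := by
    rw [hc_def, log_div hnum.ne' hden.ne', log_mul hq0.ne' (by linarith),
      log_mul hp0.ne' (by linarith)]
    ring
  have hbase : 1 - p + p * exp c = exp (log (1 - p) - log (1 - q)) := by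
    have h1q : 1 - q ≠ 0 := by linarith
    rw [exp_log (div_pos hnum hden), exp_sub, exp_log (by linarith), exp_log (by linarith)]
    field_simp
    ring
  refine (measureReal_sum_div_ge_le_exp_mul hf hf01 hn hc q).trans_eq ?_
  rw [hbase, ← exp_nat_mul, ← exp_add, klBin, log_div hq0.ne' hp0.ne',
    log_div (by linarith) (by linarith), hc_eq]
  ring_nf

lemma measureReal_sum_div_ge_le_exp_klBin (hf : Measurable f)
    (hf01 : ∀ z, f z ∈ Icc (0 : ℝ) 1) (hn : 0 < n) {q : ℝ} (hp0 : 0 < ∫ z, f z ∂μ)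
    (hpq : ∫ z, f z ∂μ < q) (hq1 : q ≤ 1) :
    (Measure.pi fun _ : Fin n => μ).real {x | q ≤ (∑ i, f (x i)) / n} ≤
      exp (-(n * klBin q (∫ z, f z ∂μ))) := by
  rcases hq1.lt_or_eq with hq1 | rfl
  · exact measureReal_sum_div_ge_le_exp_klBin_of_lt_one hf hf01 hn hp0 hpq hq1
  have hcont := continuous_klBin_left hp0.ne' hpq.ne
  have hlim : Tendsto (fun r => exp (-(n * klBin r (∫ z, f z ∂μ)))) (𝓝[<] 1)
      (𝓝 (exp (-(n * klBin 1 (∫ z, f z ∂μ))))) :=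
    ((by fun_prop : Continuous fun r => exp (-(n * klBin r (∫ z, f z ∂μ)))).tendsto 1).mono_left
      nhdsWithin_le_nhds
  refine ge_of_tendsto hlim ?_
  filter_upwards [Ioo_mem_nhdsLT hpq] with r ⟨hpr, hr1⟩
  exact (measureReal_mono fun x hx => hr1.le.trans hx).trans
    (measureReal_sum_div_ge_le_exp_klBin_of_lt_one hf hf01 hn hp0 hpr hr1)

/-- Upper tail: if `kl(q, p) ≥ t` first happens at `q = r > p`, the event is contained in
`{r ≤ mean}`, to which the Chernoff bound applies. -/
lemma measureReal_sum_div_ge_and_klBin_gt_le (hf : Measurable f)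
    (hf01 : ∀ z, f z ∈ Icc (0 : ℝ) 1) (hn : 0 < n) (hp0 : 0 < ∫ z, f z ∂μ)
    (hp1 : ∫ z, f z ∂μ < 1) {t : ℝ} (ht : 0 < t) :
    (Measure.pi fun _ : Fin n => μ).real
      {x | ∫ z, f z ∂μ ≤ (∑ i, f (x i)) / n ∧ t < klBin ((∑ i, f (x i)) / n) (∫ z, f z ∂μ)} ≤
      exp (-(n * t)) := by
  set p := ∫ z, f z ∂μ
  set K := Icc p 1 ∩ {r | t ≤ klBin r p}
  have hsub : ∀ x : Fin n → X, p ≤ (∑ i, f (x i)) / n ∧ t < klBin ((∑ i, f (x i)) / n) p →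
      (∑ i, f (x i)) / n ∈ K :=
    fun x hx => ⟨⟨hx.1, (sum_div_mem_Icc hf01 hn x).2⟩, hx.2.le⟩
  rcases K.eq_empty_or_nonempty with hK | hK
  · have hempty : {x : Fin n → X | p ≤ (∑ i, f (x i)) / n ∧
        t < klBin ((∑ i, f (x i)) / n) p} = ∅ :=
      eq_empty_of_forall_notMem fun x hx => by simpa [hK] using hsub x hx
    rw [hempty, measureReal_empty]
    positivity
  obtain ⟨r, hrK, hrmin⟩ := (isCompact_Icc.inter_right
    (isClosed_le continuous_const (continuous_klBin_left hp0.ne' hp1.ne))).exists_isLeast hK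
  have hpr : p < r := hrK.1.1.lt_of_ne fun hpr => by
    have : t ≤ klBin r p := hrK.2
    rw [← hpr, klBin_self hp0.ne' hp1.ne] at this
    linarith
  calc _ ≤ (Measure.pi fun _ : Fin n => μ).real {x | r ≤ (∑ i, f (x i)) / n} :=
        measureReal_mono fun x hx => hrmin (hsub x hx)
    _ ≤ exp (-(n * klBin r p)) :=
        measureReal_sum_div_ge_le_exp_klBin hf hf01 hn hp0 hpr hrK.1.2
    _ ≤ exp (-(n * t)) := by
        gcongr
        exact hrK.2

lemma measureReal_klBin_sum_div_gt_le (hf : Measurable f) (hf01 : ∀ z, f z ∈ Icc (0 : ℝ) 1)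
    (hn : 0 < n) (t : ℝ) :
    (Measure.pi fun _ : Fin n => μ).real
      {x | t < klBin ((∑ i, f (x i)) / n) (∫ z, f z ∂μ)} ≤ 2 * exp (-(n * t)) := by
  rcases le_or_gt t 0 with ht | ht
  · have : 1 ≤ exp (-(n * t)) := one_le_exp (by nlinarith [(Nat.cast_pos.2 hn : (0 : ℝ) < n)])
    linarith [measureReal_le_one (μ := Measure.pi fun _ : Fin n => μ)
      (s := {x | t < klBin ((∑ i, f (x i)) / n) (∫ z, f z ∂μ)})]
  obtain ⟨hp0, hp1⟩ := integral_mem_Icc (μ := μ) hf hf01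
  set p := ∫ z, f z ∂μ
  have hdegenerate : (p = 0 ∨ p = 1) →
      {x : Fin n → X | t < klBin ((∑ i, f (x i)) / n) p} = ∅ := by
    rintro (hp | hp) <;> refine eq_empty_of_forall_notMem fun x hx => ?_ <;>
      rw [mem_ofPred_eq, hp] at hx
    · exact (klBin_zero_right_nonpos (sum_div_mem_Icc hf01 hn x)).not_gt (ht.trans hx)
    · exact (klBin_one_right_nonpos (sum_div_mem_Icc hf01 hn x)).not_gt (ht.trans hx)
  rcases hp0.eq_or_lt with hp0 | hp0
  · rw [hdegenerate (.inl hp0.symm), measureReal_empty]; positivity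
  rcases hp1.eq_or_lt with hp1 | hp1
  · rw [hdegenerate (.inr hp1), measureReal_empty]; positivity
  -- the lower tail of `f` is the upper tail of `1 - f`
  set g := fun z => 1 - f z
  have hg : Measurable g := measurable_const.sub hf
  have hg01 : ∀ z, g z ∈ Icc (0 : ℝ) 1 := fun z =>
    ⟨by simp [g, (hf01 z).2], by simp [g, (hf01 z).1]⟩
  have hgp : ∫ z, g z ∂μ = 1 - p := by
    rw [integral_sub (integrable_const 1) (integrable_of_mem_Icc hf hf01)]
    simp [p]
  have hgmean : ∀ x : Fin n → X, (∑ i, g (x i)) / n = 1 - (∑ i, f (x i)) / n := fun x => by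
    have hn' : (n : ℝ) ≠ 0 := by positivity
    simp only [g, Finset.sum_sub_distrib]
    field_simp
    simp
  calc _ ≤ (Measure.pi fun _ : Fin n => μ).real
        ({x | p ≤ (∑ i, f (x i)) / n ∧ t < klBin ((∑ i, f (x i)) / n) p} ∪
          {x | ∫ z, g z ∂μ ≤ (∑ i, g (x i)) / n ∧
            t < klBin ((∑ i, g (x i)) / n) (∫ z, g z ∂μ)}) := by
        refine measureReal_mono fun x hx => ?_
        rcases le_total p ((∑ i, f (x i)) / n) with hpx | hxp
        · exact .inl ⟨hpx, hx⟩
        · refine .inr ?_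
          rw [mem_ofPred_eq, hgmean, hgp, klBin_one_sub_one_sub]
          exact ⟨by linarith, hx⟩
    _ ≤ exp (-(n * t)) + exp (-(n * t)) :=
        (measureReal_union_le _ _).trans (add_le_add
          (measureReal_sum_div_ge_and_klBin_gt_le hf hf01 hn hp0 hp1 ht)
          (measureReal_sum_div_ge_and_klBin_gt_le hg hg01 hn (by linarith) (by linarith) ht))
    _ = 2 * exp (-(n * t)) := by ring

end Chernoff

section Bind

variable {A Y : Type*} [MeasurableSpace A] [MeasurableSpace Y]

lemma measurable_map_prodMk_withDensity (pr : Measure A) [SFinite pr] {d : Y → A → ℝ≥0}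
    (hd : Measurable (Function.uncurry d)) :
    Measurable fun y => (pr.withDensity fun a => d y a).map (·, y) := by
  have hd' : Measurable (Function.uncurry fun y a => (d y a : ℝ≥0∞)) := hd.coe_nnreal_ennreal
  have hκ : ∀ y, (pr.withDensity fun a => d y a).map (·, y) =
      (Kernel.withDensity (Kernel.const Y pr) (fun y a => d y a) ×ₖ Kernel.id) y := fun y => by
    rw [Kernel.prod_apply, Kernel.withDensity_apply _ hd', Kernel.id_apply, Kernel.const_apply,
      Measure.prod_dirac]
  simp_rw [hκ]
  exact Kernel.measurable _

variable {ν : Measure Y} {κ : Y → Measure A}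

lemma isProbabilityMeasure_bind_map_prodMk [IsProbabilityMeasure ν]
    (hκ : Measurable fun y => (κ y).map (·, y)) (h1 : ∀ y, IsProbabilityMeasure (κ y)) :
    IsProbabilityMeasure (ν.bind fun y => (κ y).map (·, y)) :=
  ⟨by simp [Measure.bind_apply .univ hκ.aemeasurable,
    Measure.map_apply measurable_prodMk_right .univ]⟩

lemma bind_map_prodMk_le_smul_prod [SFinite ν] {pr : Measure A} [SFinite pr]
    (hκ : Measurable fun y => (κ y).map (·, y)) {c : ℝ≥0∞} (hc : ∀ y, κ y ≤ c • pr) :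
    ν.bind (fun y => (κ y).map (·, y)) ≤ c • pr.prod ν := by
  refine Measure.le_iff.2 fun s hs => ?_
  rw [Measure.bind_apply hs hκ.aemeasurable, Measure.smul_apply, smul_eq_mul,
    Measure.prod_apply_symm hs, ← lintegral_const_mul _ (measurable_measure_prodMk_right hs)]
  refine lintegral_mono fun y => ?_
  rw [Measure.map_apply measurable_prodMk_right hs]
  exact hc y _

end Bind

lemma empLoss_mem_Icc {A B : Type*} {ℓ : A → B → ℝ} (hrange : ∀ h z, ℓ h z ∈ Icc (0 : ℝ) 1)
    {n : ℕ} (hn : 0 < n) (h : A) (x : Fin n → B) : empLoss ℓ n h x ∈ Icc (0 : ℝ) 1 :=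
  sum_div_mem_Icc (hrange h) hn x

section Gibbs

variable {ℓ : H → X → ℝ} {n : ℕ} {β : ℝ}

lemma measurable_empLoss (hmeas : Measurable (Function.uncurry ℓ)) :
    Measurable fun w : H × (Fin n → X) => empLoss ℓ n w.1 w.2 :=
  (Finset.measurable_sum _ fun i _ =>
    hmeas.comp (measurable_fst.prodMk ((measurable_pi_apply i).comp measurable_snd))).div_const _

lemma measurable_trueLoss (μ : Measure X) [SFinite μ] (hmeas : Measurable (Function.uncurry ℓ)) :
    Measurable (trueLoss ℓ μ) :=
  hmeas.stronglyMeasurable.integral_prod_right'.measurable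

lemma measurable_partitionZ (pr : Measure H) [SFinite pr]
    (hmeas : Measurable (Function.uncurry ℓ)) : Measurable (partitionZ ℓ pr n β) :=
  (((measurable_empLoss hmeas).comp measurable_swap).const_mul (-β)).exp.stronglyMeasurable
    |>.integral_prod_right'.measurable

variable {pr : Measure H} [IsProbabilityMeasure pr]

lemma integrable_exp_neg_mul_empLoss (hmeas : Measurable (Function.uncurry ℓ))
    (hrange : ∀ h z, ℓ h z ∈ Icc (0 : ℝ) 1) (hn : 0 < n) (hβ : 0 ≤ β) (x : Fin n → X) :
    Integrable (fun h => exp (-β * empLoss ℓ n h x)) pr := by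
  have hm : Measurable fun h => exp (-β * empLoss ℓ n h x) :=
    (((measurable_empLoss hmeas).comp measurable_prodMk_right).const_mul (-β)).exp
  refine Integrable.of_bound hm.aestronglyMeasurable 1 (ae_of_all _ fun h => ?_)
  rw [norm_eq_abs, abs_of_pos (exp_pos _), exp_le_one_iff]
  nlinarith [(empLoss_mem_Icc hrange hn h x).1]

lemma exp_neg_le_partitionZ (hmeas : Measurable (Function.uncurry ℓ))
    (hrange : ∀ h z, ℓ h z ∈ Icc (0 : ℝ) 1) (hn : 0 < n) (hβ : 0 ≤ β) (x : Fin n → X) :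
    exp (-β) ≤ partitionZ ℓ pr n β x := by
  calc exp (-β) = ∫ _, exp (-β) ∂pr := by simp
    _ ≤ partitionZ ℓ pr n β x :=
      integral_mono (integrable_const _) (integrable_exp_neg_mul_empLoss hmeas hrange hn hβ x)
        fun h => exp_le_exp.2 (by nlinarith [(empLoss_mem_Icc hrange hn h x).2])

lemma gibbs_le_smul (hmeas : Measurable (Function.uncurry ℓ))
    (hrange : ∀ h z, ℓ h z ∈ Icc (0 : ℝ) 1) (hn : 0 < n) (hβ : 0 ≤ β) (x : Fin n → X) :
    gibbs ℓ pr n β x ≤ ENNReal.ofReal (exp β) • pr := by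
  have hZ := exp_neg_le_partitionZ (pr := pr) hmeas hrange hn hβ x
  rw [gibbs, ← withDensity_const]
  refine withDensity_mono (ae_of_all _ fun h => ENNReal.ofReal_le_ofReal ?_)
  rw [div_le_iff₀ ((exp_pos _).trans_le hZ)]
  calc exp (-β * empLoss ℓ n h x) ≤ 1 :=
        exp_le_one_iff.2 (by nlinarith [(empLoss_mem_Icc hrange hn h x).1])
    _ = exp β * exp (-β) := by rw [← exp_add, add_neg_cancel, exp_zero]
    _ ≤ exp β * partitionZ ℓ pr n β x := by gcongr

lemma isProbabilityMeasure_gibbs (hmeas : Measurable (Function.uncurry ℓ))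
    (hrange : ∀ h z, ℓ h z ∈ Icc (0 : ℝ) 1) (hn : 0 < n) (hβ : 0 ≤ β) (x : Fin n → X) :
    IsProbabilityMeasure (gibbs ℓ pr n β x) := by
  have hint := integrable_exp_neg_mul_empLoss (pr := pr) hmeas hrange hn hβ x
  have hZ := (exp_pos _).trans_le (exp_neg_le_partitionZ (pr := pr) hmeas hrange hn hβ x)
  constructor
  rw [gibbs, withDensity_apply _ .univ, Measure.restrict_univ,
    ← ofReal_integral_eq_lintegral_ofReal (hint.div_const _)
      (ae_of_all _ fun h => div_nonneg (exp_pos _).le hZ.le),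
    integral_div]
  change ENNReal.ofReal (partitionZ ℓ pr n β x / partitionZ ℓ pr n β x) = 1
  rw [div_self hZ.ne', ENNReal.ofReal_one]

lemma measurable_gibbs_map_prodMk (hmeas : Measurable (Function.uncurry ℓ)) :
    Measurable fun x : Fin n → X => (gibbs ℓ pr n β x).map (·, x) :=
  measurable_map_prodMk_withDensity (d := fun x h =>
      (exp (-β * empLoss ℓ n h x) / partitionZ ℓ pr n β x).toNNReal) pr <|
    measurable_real_toNNReal.comp <|
      (((measurable_empLoss hmeas).comp measurable_swap).const_mul (-β)).exp.div
        ((measurable_partitionZ pr hmeas).comp measurable_fst)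

end Gibbs

section JointRho

variable {μ : Measure X} [IsProbabilityMeasure μ] {pr : Measure H} [IsProbabilityMeasure pr]
  {ℓ : H → X → ℝ} {n : ℕ} {β : ℝ}

lemma isProbabilityMeasure_jointRho (hmeas : Measurable (Function.uncurry ℓ))
    (hrange : ∀ h z, ℓ h z ∈ Icc (0 : ℝ) 1) (hn : 0 < n) (hβ : 0 ≤ β) :
    IsProbabilityMeasure (jointRho ℓ μ pr n β) :=
  isProbabilityMeasure_bind_map_prodMk (measurable_gibbs_map_prodMk hmeas)
    (isProbabilityMeasure_gibbs hmeas hrange hn hβ)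

lemma jointRho_le_smul_prod (hmeas : Measurable (Function.uncurry ℓ))
    (hrange : ∀ h z, ℓ h z ∈ Icc (0 : ℝ) 1) (hn : 0 < n) (hβ : 0 ≤ β) :
    jointRho ℓ μ pr n β ≤ ENNReal.ofReal (exp β) • pr.prod (Measure.pi fun _ => μ) :=
  bind_map_prodMk_le_smul_prod (measurable_gibbs_map_prodMk hmeas)
    (gibbs_le_smul hmeas hrange hn hβ)

lemma measurableSet_klBin_gt (hmeas : Measurable (Function.uncurry ℓ)) (t : ℝ) :
    MeasurableSet {w : H × (Fin n → X) | t < klBin (empLoss ℓ n w.1 w.2) (trueLoss ℓ μ w.1)} := by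
  have hL := measurable_empLoss (n := n) hmeas
  have hT : Measurable fun w : H × (Fin n → X) => trueLoss ℓ μ w.1 :=
    (measurable_trueLoss μ hmeas).comp measurable_fst
  refine measurableSet_lt measurable_const ?_
  unfold klBin
  fun_prop

lemma jointRho_klBin_gt_le (hmeas : Measurable (Function.uncurry ℓ))
    (hrange : ∀ h z, ℓ h z ∈ Icc (0 : ℝ) 1) (hn : 0 < n) (hβ : 0 ≤ β) (t : ℝ) :
    jointRho ℓ μ pr n β {w | t < klBin (empLoss ℓ n w.1 w.2) (trueLoss ℓ μ w.1)} ≤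
      ENNReal.ofReal (2 * exp (β - n * t)) := by
  have hchernoff : ∀ h, (Measure.pi fun _ : Fin n => μ)
      {x | t < klBin (empLoss ℓ n h x) (trueLoss ℓ μ h)} ≤ ENNReal.ofReal (2 * exp (-(n * t))) :=
    fun h => by
      rw [← ofReal_measureReal]
      exact ENNReal.ofReal_le_ofReal <|
        measureReal_klBin_sum_div_gt_le (hmeas.comp measurable_prodMk_left : Measurable (ℓ h))
          (hrange h) hn t
  calc _ ≤ ENNReal.ofReal (exp β) * pr.prod (Measure.pi fun _ => μ)
        {w | t < klBin (empLoss ℓ n w.1 w.2) (trueLoss ℓ μ w.1)} :=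
        jointRho_le_smul_prod hmeas hrange hn hβ _
    _ ≤ ENNReal.ofReal (exp β) * ENNReal.ofReal (2 * exp (-(n * t))) := by
        rw [Measure.prod_apply (measurableSet_klBin_gt hmeas t)]
        gcongr
        exact (lintegral_mono hchernoff).trans_eq (by simp)
    _ = ENNReal.ofReal (2 * exp (β - n * t)) := by
        rw [← ENNReal.ofReal_mul (exp_pos _).le, sub_eq_add_neg, exp_add]
        ring_nf

lemma ofReal_one_sub_le_jointRho_klBin_le (hmeas : Measurable (Function.uncurry ℓ))
    (hrange : ∀ h z, ℓ h z ∈ Icc (0 : ℝ) 1) (hn : 0 < n) (hβ : 0 ≤ β) (t : ℝ) :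
    ENNReal.ofReal (1 - 2 * exp (β - n * t)) ≤
      jointRho ℓ μ pr n β {w | klBin (empLoss ℓ n w.1 w.2) (trueLoss ℓ μ w.1) ≤ t} := by
  have := isProbabilityMeasure_jointRho (μ := μ) (pr := pr) hmeas hrange hn hβ
  have hcompl : {w : H × (Fin n → X) | klBin (empLoss ℓ n w.1 w.2) (trueLoss ℓ μ w.1) ≤ t} =
      {w | t < klBin (empLoss ℓ n w.1 w.2) (trueLoss ℓ μ w.1)}ᶜ := by
    ext; simp
  rw [hcompl, prob_compl_eq_one_sub (measurableSet_klBin_gt hmeas t),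
    ENNReal.ofReal_sub _ (by positivity), ENNReal.ofReal_one]
  exact tsub_le_tsub_left (jointRho_klBin_gt_le hmeas hrange hn hβ t) 1

end JointRho

lemma Lam_le {A B : Type*} [MeasurableSpace A] {ℓ : A → B → ℝ} (pr : Measure A)
    [IsProbabilityMeasure pr] {n : ℕ} {β : ℝ} (hβ : 0 ≤ β) {x : Fin n → B}
    (hL : ∀ g, empLoss ℓ n g x ∈ Icc (0 : ℝ) 1) (h : A) : Lam ℓ pr n β h x ≤ β := by
  have hphi_le : ∀ r, phiHat ℓ pr n r x ≤ 1 := fun r => measureReal_le_one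
  have hbdd : BddBelow {v : ℝ | ∃ r : ℝ, 0 < phiHat ℓ pr n (empLoss ℓ n h x + r) x ∧
      v = β * r + log (1 / phiHat ℓ pr n (empLoss ℓ n h x + r) x)} := by
    refine ⟨-β, ?_⟩
    rintro v ⟨r, hr, rfl⟩
    obtain ⟨g, hg⟩ : {g | empLoss ℓ n g x ≤ empLoss ℓ n h x + r}.Nonempty :=
      nonempty_of_measure_ne_zero (μ := pr) fun h0 => hr.ne' (by simp [phiHat, h0])
    have hr1 : -1 ≤ r := by linarith [(hL g).1, (hL h).2, mem_ofPred.1 hg]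
    have hlog : 0 ≤ log (1 / phiHat ℓ pr n (empLoss ℓ n h x + r) x) :=
      log_nonneg (by rw [le_div_iff₀ hr, one_mul]; exact hphi_le _)
    nlinarith
  have hphi_one : phiHat ℓ pr n (empLoss ℓ n h x + (1 - empLoss ℓ n h x)) x = 1 := by
    have huniv : {g | empLoss ℓ n g x ≤ empLoss ℓ n h x + (1 - empLoss ℓ n h x)} = univ :=
      eq_univ_of_forall fun g => by simpa using (hL g).2
    rw [phiHat, huniv, measure_univ, ENNReal.toReal_one]
  calc Lam ℓ pr n β h x ≤ β * (1 - empLoss ℓ n h x) + log (1 / 1) :=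
        csInf_le hbdd ⟨1 - empLoss ℓ n h x, by rw [hphi_one]; exact one_pos, by rw [hphi_one]⟩
    _ ≤ β := by
        rw [div_one, log_one, add_zero]
        nlinarith [(hL h).1]

theorem statement5
    (μ : Measure X) [IsProbabilityMeasure μ]
    (pr : Measure H) [IsProbabilityMeasure pr]
    (ℓ : H → X → ℝ) (hmeas : Measurable (Function.uncurry ℓ))
    (hrange : ∀ h z, ℓ h z ∈ Set.Icc (0 : ℝ) 1)
    (n : ℕ) (hn : 8 ≤ n) (β : ℝ) (hβ : 0 < β)
    (δ : ℝ) (hδ : 0 < δ) :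
    (∀ (h : H) (x : Fin n → X), Lam ℓ pr n β h x ≤ β) ∧
    ENNReal.ofReal (1 - δ) ≤
      jointRho ℓ μ pr n β {p : H × (Fin n → X) |
        klBin (empLoss ℓ n p.1 p.2) (trueLoss ℓ μ p.1) ≤
          (1 / n) * (β + Real.log (2 * Real.sqrt n / δ))} := by
  have hn0 : 0 < n := by omega
  refine ⟨fun h x => Lam_le pr hβ.le (empLoss_mem_Icc hrange hn0 · x) h,
    (ENNReal.ofReal_le_ofReal ?_).trans
      (ofReal_one_sub_le_jointRho_klBin_le hmeas hrange hn0 hβ.le _)⟩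
  have hsqrt : 1 ≤ √(n : ℝ) := one_le_sqrt.2 (by exact_mod_cast hn0)
  have hfailure : 2 * exp (β - n * ((1 / n) * (β + log (2 * √n / δ)))) = δ / √n := by
    rw [← mul_assoc, mul_one_div_cancel (by positivity), one_mul, sub_add_cancel_left, exp_neg,
      exp_log (by positivity)]
    field_simp
  rw [hfailure]
  linarith [div_le_self hδ.le hsqrt]
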